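/- Substitution preserves the 'enough burns' predicate: if expression e satisfies enough_burns and value v satisfies enough_burns (for values), then the substitution e[v/x] satisfies enough_burns, and moreover nb_unprotected_apps(e[v/x]) = nb_unprotected_apps(e). -/

import Mathlib

/-- Lambda calculus with a `burn` construct; values are literals, recursive
closures (here lambdas), pairs of values and injections of values. -/
inductive Expr : Type
  | var : String → Expr
  | lit : ℤ → Expr
  | lam : String → Expr → Expr
  | app : Expr → Expr → Expr
  | burn : Expr → Expr
  | pair : Expr → Expr → Expr
  | inl : Expr → Expr
  | inr : Expr → Expr

/-- Unprotected applications: does not recurse into lambda bodies or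
burn-protected bodies. -/
def Expr.nbUnprotectedApps : Expr → ℕ
  | .var _ => 0
  | .lit _ => 0
  | .lam _ _ => 0
  | .burn _ => 0
  | .app e₁ e₂ => 1 + e₁.nbUnprotectedApps + e₂.nbUnprotectedApps
  | .pair e₁ e₂ => e₁.nbUnprotectedApps + e₂.nbUnprotectedApps
  | .inl e => e.nbUnprotectedApps
  | .inr e => e.nbUnprotectedApps

/-- `enough_burns`: every lambda abstraction occurring anywhere has a body
with zero unprotected applications, recursively. -/
def Expr.enoughBurns : Expr → Prop
  | .var _ => True
  | .lit _ => True
  | .lam _ b => b.nbUnprotectedApps = 0 ∧ b.enoughBurns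
  | .app e₁ e₂ => e₁.enoughBurns ∧ e₂.enoughBurns
  | .burn e => e.enoughBurns
  | .pair e₁ e₂ => e₁.enoughBurns ∧ e₂.enoughBurns
  | .inl e => e.enoughBurns
  | .inr e => e.enoughBurns

/-- Values: literals, closures, pairs of values, injections of values. -/
inductive Expr.IsValue : Expr → Prop
  | lit (z : ℤ) : IsValue (.lit z)
  | lam (x : String) (b : Expr) : IsValue (.lam x b)
  | pair {v w : Expr} : IsValue v → IsValue w → IsValue (.pair v w)
  | inl {v : Expr} : IsValue v → IsValue (.inl v)
  | inr {v : Expr} : IsValue v → IsValue (.inr v)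

/-- Substitution of a (closed) value for a variable. -/
def Expr.subst (x : String) (v : Expr) : Expr → Expr
  | .var y => if y = x then v else .var y
  | .lit z => .lit z
  | .lam y b => if y = x then .lam y b else .lam y (Expr.subst x v b)
  | .app e₁ e₂ => .app (Expr.subst x v e₁) (Expr.subst x v e₂)
  | .burn e => .burn (Expr.subst x v e)
  | .pair e₁ e₂ => .pair (Expr.subst x v e₁) (Expr.subst x v e₂)
  | .inl e => .inl (Expr.subst x v e)
  | .inr e => .inr (Expr.subst x v e)

/-! A value has no unprotected applications, so substituting one leaves the count unchanged;
this is exactly what keeps the body of a lambda at zero unprotected applications after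
substitution, and everything else in `enoughBurns` is structural. -/

namespace Expr

theorem IsValue.nbUnprotectedApps_eq_zero {v : Expr} (hv : v.IsValue) :
    v.nbUnprotectedApps = 0 := by
  induction hv <;> simp_all [nbUnprotectedApps]

theorem nbUnprotectedApps_subst {v : Expr} (x : String) (hv : v.nbUnprotectedApps = 0) :
    ∀ e : Expr, (subst x v e).nbUnprotectedApps = e.nbUnprotectedApps
  | .var y => by
    by_cases h : y = x <;> simp [subst, h, hv, nbUnprotectedApps]
  | .lit _ | .burn _ => rfl
  | .lam y _ => by by_cases h : y = x <;> simp [subst, h, nbUnprotectedApps]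
  | .app e₁ e₂ | .pair e₁ e₂ => by
    simp only [subst, nbUnprotectedApps, nbUnprotectedApps_subst x hv e₁,
      nbUnprotectedApps_subst x hv e₂]
  | .inl e | .inr e => nbUnprotectedApps_subst x hv e

theorem enoughBurns_subst {e v : Expr} (x : String) (he : e.enoughBurns)
    (hvb : v.enoughBurns) (hv : v.nbUnprotectedApps = 0) : (subst x v e).enoughBurns := by
  induction e with
  | var y => by_cases h : y = x <;> simp [subst, h, hvb, he]
  | lit _ => trivial
  | lam y b ih =>
    by_cases h : y = x
    · simpa [subst, h] using he
    · obtain ⟨hb₀, hb⟩ := he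
      simp only [subst, h, if_false, enoughBurns]
      exact ⟨(nbUnprotectedApps_subst x hv b).trans hb₀, ih hb⟩
  | app _ _ ih₁ ih₂ | pair _ _ ih₁ ih₂ => exact ⟨ih₁ he.1, ih₂ he.2⟩
  | burn _ ih | inl _ ih | inr _ ih => exact ih he

end Expr

/-- Substitution preserves `enough_burns` and the number of unprotected
applications. -/
theorem subst_preserves_enoughBurns (e v : Expr) (x : String)
    (he : e.enoughBurns) (hv : v.IsValue) (hvb : v.enoughBurns) :
    (Expr.subst x v e).enoughBurns ∧
      (Expr.subst x v e).nbUnprotectedApps = e.nbUnprotectedApps :=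
  ⟨Expr.enoughBurns_subst x he hvb hv.nbUnprotectedApps_eq_zero,
    Expr.nbUnprotectedApps_subst x hv.nbUnprotectedApps_eq_zero e⟩
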